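/- arXiv:2601.09554 — 4 statements merged into one kernel-verified Lean document; each statement's English description precedes it below -/
import Mathlib

section
/- Dispersion-optimal linear estimator, case 1 < α < 2: let α ∈ (1,2), γ₁, γ₂ > 0, and real coefficients a₁₁, a₁₂, a₂₁, a₂₂ with a₂₁ ≠ 0, a₂₂ ≠ 0 and a₁₁a₂₂ − a₁₂a₂₁ ≠ 0. Define f : ℝ → ℝ by f(a) = |a₂₁a − a₁₁|^α γ₁^α + |a₂₂a − a₁₂|^α γ₂^α. Then f attains a strict global minimum at â = ((|a₂₁|γ₁)^{α/(α−1)}·(a₁₁/a₂₁) + (|a₂₂|γ₂)^{α/(α−1)}·(a₁₂/a₂₂)) / ((|a₂₁|γ₁)^{α/(α−1)} + (|a₂₂|γ₂)^{α/(α−1)}), i.e., f(â) < f(a) for every a ≠ â. -/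
/-!
Writing `b₁ = a₁₁ / a₂₁`, `b₂ = a₁₂ / a₂₂` and `wᵢ = (|a₂ᵢ| γᵢ)^(α/(α-1))`, the objective becomes
`f a = w₁^(α-1) |a - b₁|^α + w₂^(α-1) |a - b₂|^α`. Its derivative is
`α (w₁^(α-1) φ(a - b₁) + w₂^(α-1) φ(a - b₂))` with `φ(x) = |x|^(α-2) x` odd, strictly increasing and
`(α-1)`-homogeneous, so `f` is strictly convex, and homogeneity makes the derivative vanish at
the weighted mean `â = (w₁ b₁ + w₂ b₂) / (w₁ + w₂)`.
-/

open Real Set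

/-- The signed power `sign x * |x|^(p-1)`; `p * signedPow p x` is the derivative of `|x|^p`. -/
noncomputable def signedPow (p x : ℝ) : ℝ := |x| ^ (p - 2) * x

section signedPow

variable {p : ℝ}

lemma signedPow_neg (x : ℝ) : signedPow p (-x) = -signedPow p x := by
  simp [signedPow]

lemma signedPow_of_nonneg (hp : 1 < p) {x : ℝ} (hx : 0 ≤ x) : signedPow p x = x ^ (p - 1) := by
  rw [signedPow, abs_of_nonneg hx, ← rpow_add_one' hx (by linarith)]
  ring_nf

lemma signedPow_mul_of_pos {t : ℝ} (ht : 0 < t) (x : ℝ) :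
    signedPow p (t * x) = t ^ (p - 1) * signedPow p x := by
  rw [signedPow, signedPow, abs_mul, abs_of_pos ht, mul_rpow ht.le (abs_nonneg x),
    show p - 1 = p - 2 + 1 by ring, rpow_add_one ht.ne']
  ring

lemma strictMono_signedPow (hp : 1 < p) : StrictMono (signedPow p) := by
  refine strictMono_of_odd_strictMonoOn_nonneg signedPow_neg ?_
  intro x hx y hy hxy
  rw [signedPow_of_nonneg hp hx, signedPow_of_nonneg hp hy]
  exact strictMonoOn_rpow_Ici_of_exponent_pos (by linarith) hx hy hxy

lemma hasDerivAt_abs_sub_rpow (hp : 1 < p) (b x : ℝ) :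
    HasDerivAt (fun a => |a - b| ^ p) (p * signedPow p (x - b)) x := by
  simpa [signedPow, mul_assoc] using (hasDerivAt_abs_rpow (x - b) hp).comp_sub_const x b

end signedPow

lemma lt_of_hasDerivAt_of_strictMono {f f' : ℝ → ℝ} (hf : ∀ x, HasDerivAt f (f' x) x)
    (hf' : StrictMono f') {m : ℝ} (hm : f' m = 0) {x : ℝ} (hx : x ≠ m) : f m < f x := by
  have hderiv : deriv f = f' := funext fun x => (hf x).deriv
  have hconv : StrictConvexOn ℝ univ f :=
    (hderiv ▸ hf').strictConvexOn_univ_of_deriv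
      (continuous_iff_continuousAt.2 fun x => (hf x).continuousAt)
  rcases hx.lt_or_gt with hxm | hmx
  · have h := hconv.slope_lt_of_hasDerivAt (mem_univ x) (mem_univ m) hxm (hf m)
    rw [hm, slope_def_field, div_neg_iff] at h
    rcases h with ⟨-, h⟩ | ⟨h, -⟩ <;> linarith
  · have h := hconv.lt_slope_of_hasDerivAt (mem_univ m) (mem_univ x) hmx (hf m)
    rw [hm, slope_def_field, div_pos_iff] at h
    rcases h with ⟨h, -⟩ | ⟨-, h⟩ <;> linarith

theorem weightedMean_lt_abs_sub_rpow_add {p w₁ w₂ : ℝ} (hp : 1 < p) (hw₁ : 0 < w₁) (hw₂ : 0 < w₂)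
    (b₁ b₂ : ℝ) {a : ℝ} (ha : a ≠ (w₁ * b₁ + w₂ * b₂) / (w₁ + w₂)) :
    w₁ ^ (p - 1) * |(w₁ * b₁ + w₂ * b₂) / (w₁ + w₂) - b₁| ^ p
        + w₂ ^ (p - 1) * |(w₁ * b₁ + w₂ * b₂) / (w₁ + w₂) - b₂| ^ p
      < w₁ ^ (p - 1) * |a - b₁| ^ p + w₂ ^ (p - 1) * |a - b₂| ^ p := by
  set m := (w₁ * b₁ + w₂ * b₂) / (w₁ + w₂) with hm
  have hW : 0 < w₁ + w₂ := add_pos hw₁ hw₂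
  refine lt_of_hasDerivAt_of_strictMono (f := fun a => w₁ ^ (p - 1) * |a - b₁| ^ p
      + w₂ ^ (p - 1) * |a - b₂| ^ p)
    (f' := fun a => w₁ ^ (p - 1) * (p * signedPow p (a - b₁))
      + w₂ ^ (p - 1) * (p * signedPow p (a - b₂))) (fun x => ?_) ?_ ?_ ha
  · exact ((hasDerivAt_abs_sub_rpow hp b₁ x).const_mul _).add
      ((hasDerivAt_abs_sub_rpow hp b₂ x).const_mul _)
  · intro x y hxy
    have h₁ := strictMono_signedPow hp (sub_lt_sub_right hxy b₁)
    have h₂ := strictMono_signedPow hp (sub_lt_sub_right hxy b₂)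
    have : 0 < p := by linarith
    beta_reduce
    gcongr
  · have hm₁ : m - b₁ = w₂ / (w₁ + w₂) * (b₂ - b₁) := by rw [hm]; field_simp; ring
    have hm₂ : m - b₂ = -(w₁ / (w₁ + w₂) * (b₂ - b₁)) := by rw [hm]; field_simp; ring
    rw [hm₁, hm₂, signedPow_neg, signedPow_mul_of_pos (div_pos hw₂ hW),
      signedPow_mul_of_pos (div_pos hw₁ hW), div_rpow hw₁.le hW.le, div_rpow hw₂.le hW.le]
    ring

lemma abs_mul_sub_rpow_mul_rpow {p k γ : ℝ} (hk : k ≠ 0) (hγ : 0 ≤ γ) (d a : ℝ) :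
    |k * a - d| ^ p * γ ^ p = (|k| * γ) ^ p * |a - d / k| ^ p := by
  rw [show k * a - d = k * (a - d / k) by field_simp, abs_mul,
    mul_rpow (abs_nonneg k) (abs_nonneg _), mul_rpow (abs_nonneg k) hγ]
  ring

lemma rpow_div_sub_one_rpow_sub_one {p x : ℝ} (hp : p ≠ 1) (hx : 0 ≤ x) :
    (x ^ (p / (p - 1))) ^ (p - 1) = x ^ p := by
  rw [← rpow_mul hx, div_mul_cancel₀ p (sub_ne_zero.2 hp)]

theorem dispersionOptimal_linear_estimator_one_lt_alpha_general
    (α γ₁ γ₂ : ℝ) (hα : α ∈ Set.Ioo (1 : ℝ) 2) (hγ₁ : 0 < γ₁) (hγ₂ : 0 < γ₂)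
    (a₁₁ a₁₂ a₂₁ a₂₂ : ℝ) (ha₂₁ : a₂₁ ≠ 0) (ha₂₂ : a₂₂ ≠ 0)
    (f : ℝ → ℝ)
    (hf : f = fun a => |a₂₁ * a - a₁₁| ^ α * γ₁ ^ α + |a₂₂ * a - a₁₂| ^ α * γ₂ ^ α)
    (aHat : ℝ)
    (haHat : aHat = ((|a₂₁| * γ₁) ^ (α / (α - 1)) * (a₁₁ / a₂₁)
        + (|a₂₂| * γ₂) ^ (α / (α - 1)) * (a₁₂ / a₂₂))
        / ((|a₂₁| * γ₁) ^ (α / (α - 1)) + (|a₂₂| * γ₂) ^ (α / (α - 1)))) :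
    ∀ a : ℝ, a ≠ aHat → f aHat < f a := by
  have hα₁ : 1 < α := hα.1
  have hc₁ : 0 < |a₂₁| * γ₁ := mul_pos (abs_pos.2 ha₂₁) hγ₁
  have hc₂ : 0 < |a₂₂| * γ₂ := mul_pos (abs_pos.2 ha₂₂) hγ₂
  have hf_eq : ∀ a, f a =
      ((|a₂₁| * γ₁) ^ (α / (α - 1))) ^ (α - 1) * |a - a₁₁ / a₂₁| ^ α
        + ((|a₂₂| * γ₂) ^ (α / (α - 1))) ^ (α - 1) * |a - a₁₂ / a₂₂| ^ α := by
    intro a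
    rw [hf]
    beta_reduce
    rw [abs_mul_sub_rpow_mul_rpow ha₂₁ hγ₁.le, abs_mul_sub_rpow_mul_rpow ha₂₂ hγ₂.le,
      rpow_div_sub_one_rpow_sub_one hα₁.ne' hc₁.le, rpow_div_sub_one_rpow_sub_one hα₁.ne' hc₂.le]
  intro a ha
  subst haHat
  rw [hf_eq, hf_eq]
  exact weightedMean_lt_abs_sub_rpow_add hα₁ (rpow_pos_of_pos hc₁ _) (rpow_pos_of_pos hc₂ _) _ _ ha

/-- Dispersion-optimal linear estimator, case `1 < α < 2`: the α-th power of the error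
dispersion `f(a) = |a₂₁a − a₁₁|^α γ₁^α + |a₂₂a − a₁₂|^α γ₂^α` attains a strict global
minimum at the given weighted combination `â`. -/
theorem dispersionOptimal_linear_estimator_one_lt_alpha
    (α γ₁ γ₂ : ℝ) (hα : α ∈ Set.Ioo (1 : ℝ) 2) (hγ₁ : 0 < γ₁) (hγ₂ : 0 < γ₂)
    (a₁₁ a₁₂ a₂₁ a₂₂ : ℝ) (ha₂₁ : a₂₁ ≠ 0) (ha₂₂ : a₂₂ ≠ 0)
    (hdet : a₁₁ * a₂₂ - a₁₂ * a₂₁ ≠ 0)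
    (f : ℝ → ℝ)
    (hf : f = fun a => |a₂₁ * a - a₁₁| ^ α * γ₁ ^ α + |a₂₂ * a - a₁₂| ^ α * γ₂ ^ α)
    (aHat : ℝ)
    (haHat : aHat = ((|a₂₁| * γ₁) ^ (α / (α - 1)) * (a₁₁ / a₂₁)
        + (|a₂₂| * γ₂) ^ (α / (α - 1)) * (a₁₂ / a₂₂))
        / ((|a₂₁| * γ₁) ^ (α / (α - 1)) + (|a₂₂| * γ₂) ^ (α / (α - 1)))) :
    ∀ a : ℝ, a ≠ aHat → f aHat < f a :=
  dispersionOptimal_linear_estimator_one_lt_alpha_general α γ₁ γ₂ hα hγ₁ hγ₂ a₁₁ a₁₂ a₂₁ a₂₂ ha₂₁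
    ha₂₂ f hf aHat haHat
end

section
/- Integrability of the conditional residual in the sub-Gaussian model: under the sub-Gaussian model, for (μ.map Y)-almost every y ∈ ℝ, ∫ √a d(condDistrib A Y μ y)(a) < ∞, and consequently the identity function is integrable with respect to condDistrib X Y μ y (i.e., E[|X| | Y = y] < ∞ for almost every y), even though X itself need not have a finite mean. -/
/-!
Conditioning on `Y = y` is controlled through the positive weight `exp (-y²)`: by disintegration it
suffices that `E[exp (-Y²) √A]` and `E[exp (-Y²) |X|]` be finite. With `β = ρ σ₁ / σ₂`, the
characteristic function shows that the residual `R = G₁ - β G₂` is a centred Gaussian independent of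
`G₂`, hence `(√A, R, G₂)` are independent. The Gaussian bound `√a E[exp (-a G₂²)] ≤ (√2 σ₂)⁻¹`
absorbs the factor `√A`, and `|X| ≤ √A |R| + |β| |Y|` together with `|Y| exp (-Y²) ≤ 1` handles `X`.
-/

open MeasureTheory ProbabilityTheory Real Set
open scoped ENNReal NNReal

lemma abs_mul_exp_neg_sq_le_one (y : ℝ) : |y| * rexp (-y ^ 2) ≤ 1 := by
  calc |y| * rexp (-y ^ 2) ≤ rexp (y ^ 2) * rexp (-y ^ 2) := by
        gcongr
        nlinarith [add_one_le_exp (y ^ 2), abs_nonneg y, sq_abs y]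
    _ = 1 := by rw [← exp_add, add_neg_cancel, exp_zero]

lemma exp_neg_sq_mul_abs_mul_le {s : ℝ} (hs : 0 ≤ s) (g₁ g₂ β : ℝ) :
    rexp (-(s * g₂) ^ 2) * |s * g₁| ≤ |β| + s * |g₁ - β * g₂| * rexp (-(s * g₂) ^ 2) := by
  have hsplit : |s * g₁| ≤ s * |g₁ - β * g₂| + |β| * |s * g₂| := by
    calc |s * g₁| = |s * (g₁ - β * g₂) + β * (s * g₂)| := by ring_nf
      _ ≤ _ := (abs_add_le _ _).trans_eq (by rw [abs_mul, abs_mul, abs_of_nonneg hs])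
  have hdecay := abs_mul_exp_neg_sq_le_one (s * g₂)
  have hexp := (exp_pos (-(s * g₂) ^ 2)).le
  nlinarith [abs_nonneg β]

lemma ae_lintegral_condDistrib_lt_top {Ω β γ : Type*} [MeasurableSpace Ω] [MeasurableSpace β]
    [MeasurableSpace γ] [StandardBorelSpace γ] [Nonempty γ] {μ : Measure Ω} [IsFiniteMeasure μ]
    {Y : Ω → β} {Z : Ω → γ} (hY : Measurable Y) (hZ : Measurable Z) {w : β → ℝ≥0∞}
    (hw : Measurable w) (hw₀ : ∀ y, w y ≠ 0) {f : γ → ℝ≥0∞} (hf : Measurable f)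
    (h : ∫⁻ ω, w (Y ω) * f (Z ω) ∂μ ≠ ∞) :
    ∀ᵐ y ∂μ.map Y, ∫⁻ z, f z ∂condDistrib Z Y μ y < ∞ := by
  have hdisint : ∫⁻ y, w y * ∫⁻ z, f z ∂condDistrib Z Y μ y ∂μ.map Y
      = ∫⁻ ω, w (Y ω) * f (Z ω) ∂μ := by
    rw [← lintegral_map (f := fun p : β × γ ↦ w p.1 * f p.2) (by fun_prop) (hY.prodMk hZ),
      ← compProd_map_condDistrib hZ.aemeasurable, Measure.lintegral_compProd (by fun_prop)]
    simp_rw [lintegral_const_mul _ hf]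
  filter_upwards [ae_lt_top (hw.mul hf.lintegral_kernel) (hdisint ▸ h)] with y hy
  exact ENNReal.lt_top_of_mul_ne_top_right hy.ne (hw₀ y)

lemma ofReal_mul_lintegral_exp_neg_mul_sq_gaussianReal_le {v : ℝ≥0} (hv : v ≠ 0) (s : ℝ) :
    ENNReal.ofReal s * ∫⁻ x, ENNReal.ofReal (rexp (-(s * x) ^ 2)) ∂gaussianReal 0 v
      ≤ ENNReal.ofReal (√(2 * v))⁻¹ := by
  rcases le_or_gt s 0 with hs | hs
  · simp [ENNReal.ofReal_of_nonpos hs]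
  have hdensity (x : ℝ) : gaussianPDF 0 v x ≤ ENNReal.ofReal (√(2 * π * v))⁻¹ := by
    refine ENNReal.ofReal_le_ofReal (mul_le_of_le_one_right (by positivity) ?_)
    exact exp_le_one_iff.mpr (div_nonpos_of_nonpos_of_nonneg (by nlinarith) (by positivity))
  have hgauss : ∫⁻ x, ENNReal.ofReal (rexp (-(s * x) ^ 2)) = ENNReal.ofReal √(π / s ^ 2) := by
    rw [← integral_gaussian, ofReal_integral_eq_lintegral_ofReal]
    · simp_rw [mul_pow, neg_mul]
    · exact integrable_exp_neg_mul_sq (by positivity)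
    · exact Filter.Eventually.of_forall fun _ ↦ (exp_pos _).le
  calc ENNReal.ofReal s * ∫⁻ x, ENNReal.ofReal (rexp (-(s * x) ^ 2)) ∂gaussianReal 0 v
      ≤ ENNReal.ofReal s *
          ∫⁻ x, ENNReal.ofReal (√(2 * π * v))⁻¹ * ENNReal.ofReal (rexp (-(s * x) ^ 2)) := by
        rw [gaussianReal_of_var_ne_zero 0 hv,
          lintegral_withDensity_eq_lintegral_mul _ (by fun_prop) (by fun_prop)]
        gcongr with x
        exact mul_le_mul_left (hdensity x) _
    _ = ENNReal.ofReal (√(2 * v))⁻¹ := by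
        rw [lintegral_const_mul _ (by fun_prop), hgauss, ← ENNReal.ofReal_mul (by positivity),
          ← ENNReal.ofReal_mul hs.le]
        congr 1
        rw [sqrt_div pi_pos.le, sqrt_sq hs.le, sqrt_mul (by positivity), sqrt_mul (by positivity),
          sqrt_mul (by positivity)]
        field_simp

lemma lintegral_prod_gaussianReal_ofReal_mul_exp_neg_mul_sq_le (ρ ν : Measure ℝ) [SFinite ρ]
    [SFinite ν] {f : ℝ → ℝ≥0∞} (hf : Measurable f) {v : ℝ≥0} (hv : v ≠ 0) :
    ∫⁻ q, ENNReal.ofReal q.1 * f q.2.1 * ENNReal.ofReal (rexp (-(q.1 * q.2.2) ^ 2))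
        ∂ρ.prod (ν.prod (gaussianReal 0 v))
      ≤ ρ univ * (∫⁻ r, f r ∂ν) * ENNReal.ofReal (√(2 * v))⁻¹ := by
  have hinner (s : ℝ) :
      ∫⁻ p, ENNReal.ofReal s * f p.1 * ENNReal.ofReal (rexp (-(s * p.2) ^ 2))
          ∂ν.prod (gaussianReal 0 v)
        ≤ (∫⁻ r, f r ∂ν) * ENNReal.ofReal (√(2 * v))⁻¹ := by
    rw [lintegral_prod _ (by fun_prop), ← lintegral_mul_const _ hf]
    refine lintegral_mono fun r ↦ ?_
    simp_rw [mul_comm (ENNReal.ofReal s) (f r), mul_assoc]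
    rw [lintegral_const_mul _ (by fun_prop), lintegral_const_mul _ (by fun_prop)]
    exact mul_le_mul_right (ofReal_mul_lintegral_exp_neg_mul_sq_gaussianReal_le hv s) _
  calc _ = ∫⁻ s, ∫⁻ p, ENNReal.ofReal s * f p.1 * ENNReal.ofReal (rexp (-(s * p.2) ^ 2))
          ∂ν.prod (gaussianReal 0 v) ∂ρ := lintegral_prod _ (by fun_prop)
    _ ≤ ∫⁻ _, (∫⁻ r, f r ∂ν) * ENNReal.ofReal (√(2 * v))⁻¹ ∂ρ := lintegral_mono hinner
    _ = _ := by rw [lintegral_const, mul_comm, mul_assoc]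

lemma map_sub_mul_prod_eq_gaussianReal_prod {Ω : Type*} [MeasurableSpace Ω] {μ : Measure Ω}
    [IsProbabilityMeasure μ] {ρ σ₁ σ₂ : ℝ} (hσ₂ : σ₂ ≠ 0) (hρ : |ρ| ≤ 1) {G₁ G₂ : Ω → ℝ}
    (hG₁ : Measurable G₁) (hG₂ : Measurable G₂)
    (hGauss : ∀ t s : ℝ, ∫ ω, Complex.exp (((t * G₁ ω + s * G₂ ω : ℝ) : ℂ) * Complex.I) ∂μ =
      Complex.exp (-(((σ₁ ^ 2 * t ^ 2 + 2 * ρ * σ₁ * σ₂ * t * s + σ₂ ^ 2 * s ^ 2) / 2 : ℝ) : ℂ))) :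
    μ.map (fun ω ↦ (G₁ ω - ρ * σ₁ / σ₂ * G₂ ω, G₂ ω)) =
      (gaussianReal 0 ((1 - ρ ^ 2) * σ₁ ^ 2).toNNReal).prod (gaussianReal 0 (σ₂ ^ 2).toNNReal) := by
  refine charFun_eq_prod_iff.mp fun t ↦ ?_
  have hvar : 0 ≤ (1 - ρ ^ 2) * σ₁ ^ 2 :=
    mul_nonneg (sub_nonneg.mpr (sq_le_one_iff_abs_le_one ρ |>.mpr hρ)) (sq_nonneg _)
  have hinner (ω : Ω) : inner ℝ (G₁ ω - ρ * σ₁ / σ₂ * G₂ ω) t.ofLp.1 + inner ℝ (G₂ ω) t.ofLp.2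
      = t.ofLp.1 * G₁ ω + (t.ofLp.2 - ρ * σ₁ / σ₂ * t.ofLp.1) * G₂ ω := by
    simp only [RCLike.inner_apply, conj_trivial]
    ring
  rw [Measure.map_map (by fun_prop) (by fun_prop), charFun_apply,
    integral_map (by fun_prop) (by fun_prop)]
  simp only [Function.comp_apply, WithLp.prod_inner_apply]
  rw [charFun_gaussianReal, charFun_gaussianReal, ← Complex.exp_add]
  simp_rw [hinner, hGauss, Real.coe_toNNReal _ hvar, Real.coe_toNNReal _ (sq_nonneg σ₂)]
  congr 1
  have hσ₂' : (σ₂ : ℂ) ≠ 0 := by exact_mod_cast hσ₂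
  push_cast
  field_simp
  ring

section WeightedMoments

variable {Ω : Type*} [MeasurableSpace Ω] {μ : Measure Ω} [IsFiniteMeasure μ]
  {S G₁ G₂ : Ω → ℝ} {β : ℝ} {ν : Measure ℝ} [SFinite ν] {v : ℝ≥0}

lemma lintegral_mul_exp_neg_sq_ne_top (hS : Measurable S) (hG₁ : Measurable G₁)
    (hG₂ : Measurable G₂) (hv : v ≠ 0)
    (hlaw : μ.map (fun ω ↦ (S ω, (G₁ ω - β * G₂ ω, G₂ ω))) =
      (μ.map S).prod (ν.prod (gaussianReal 0 v)))
    {f : ℝ → ℝ≥0∞} (hf : Measurable f) (hfν : ∫⁻ r, f r ∂ν ≠ ∞) :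
    ∫⁻ ω, ENNReal.ofReal (S ω) * f (G₁ ω - β * G₂ ω) *
      ENNReal.ofReal (rexp (-(S ω * G₂ ω) ^ 2)) ∂μ ≠ ∞ := by
  rw [← lintegral_map (f := fun q : ℝ × ℝ × ℝ ↦ ENNReal.ofReal q.1 * f q.2.1 *
    ENNReal.ofReal (rexp (-(q.1 * q.2.2) ^ 2)))
    (g := fun ω ↦ (S ω, (G₁ ω - β * G₂ ω, G₂ ω))) (by fun_prop) (by fun_prop), hlaw]
  refine ne_top_of_le_ne_top ?_
    (lintegral_prod_gaussianReal_ofReal_mul_exp_neg_mul_sq_le _ _ hf hv)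
  exact ENNReal.mul_ne_top (ENNReal.mul_ne_top (measure_ne_top _ _) hfν) ENNReal.ofReal_ne_top

lemma lintegral_exp_neg_sq_mul_ofReal_ne_top [IsFiniteMeasure ν] (hS : Measurable S)
    (hG₁ : Measurable G₁) (hG₂ : Measurable G₂) (hv : v ≠ 0)
    (hlaw : μ.map (fun ω ↦ (S ω, (G₁ ω - β * G₂ ω, G₂ ω))) =
      (μ.map S).prod (ν.prod (gaussianReal 0 v))) :
    ∫⁻ ω, ENNReal.ofReal (rexp (-(S ω * G₂ ω) ^ 2)) * ENNReal.ofReal (S ω) ∂μ ≠ ∞ := by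
  simpa [mul_comm] using
    lintegral_mul_exp_neg_sq_ne_top hS hG₁ hG₂ hv hlaw (f := 1) measurable_const (by simp)

lemma lintegral_exp_neg_sq_mul_enorm_ne_top (hS : Measurable S) (hS₀ : ∀ ω, 0 ≤ S ω)
    (hG₁ : Measurable G₁) (hG₂ : Measurable G₂) (hv : v ≠ 0)
    (hlaw : μ.map (fun ω ↦ (S ω, (G₁ ω - β * G₂ ω, G₂ ω))) =
      (μ.map S).prod (ν.prod (gaussianReal 0 v)))
    (hν : ∫⁻ r, ‖r‖ₑ ∂ν ≠ ∞) :
    ∫⁻ ω, ENNReal.ofReal (rexp (-(S ω * G₂ ω) ^ 2)) * ‖S ω * G₁ ω‖ₑ ∂μ ≠ ∞ := by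
  have hpointwise (ω : Ω) : ENNReal.ofReal (rexp (-(S ω * G₂ ω) ^ 2)) * ‖S ω * G₁ ω‖ₑ
      ≤ ENNReal.ofReal |β| + ENNReal.ofReal (S ω) * ‖G₁ ω - β * G₂ ω‖ₑ *
        ENNReal.ofReal (rexp (-(S ω * G₂ ω) ^ 2)) := by
    simp only [enorm_eq_ofReal_abs]
    rw [← ENNReal.ofReal_mul (exp_pos _).le, ← ENNReal.ofReal_mul (hS₀ ω),
      ← ENNReal.ofReal_mul (mul_nonneg (hS₀ ω) (abs_nonneg _)),
      ← ENNReal.ofReal_add (abs_nonneg _) (by have := hS₀ ω; positivity)]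
    exact ENNReal.ofReal_le_ofReal (exp_neg_sq_mul_abs_mul_le (hS₀ ω) _ _ _)
  refine ne_of_lt ?_
  calc _ ≤ ∫⁻ ω, ENNReal.ofReal |β| + ENNReal.ofReal (S ω) * ‖G₁ ω - β * G₂ ω‖ₑ *
        ENNReal.ofReal (rexp (-(S ω * G₂ ω) ^ 2)) ∂μ := lintegral_mono hpointwise
    _ = ENNReal.ofReal |β| * μ univ + ∫⁻ ω, ENNReal.ofReal (S ω) * ‖G₁ ω - β * G₂ ω‖ₑ *
        ENNReal.ofReal (rexp (-(S ω * G₂ ω) ^ 2)) ∂μ := by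
      rw [lintegral_add_left measurable_const, lintegral_const]
    _ < ∞ := ENNReal.add_lt_top.mpr ⟨ENNReal.mul_lt_top ENNReal.ofReal_lt_top (measure_lt_top _ _),
      (lintegral_mul_exp_neg_sq_ne_top hS hG₁ hG₂ hv hlaw (by fun_prop) hν).lt_top⟩

end WeightedMoments

theorem subGaussian_conditional_residual_integrable_general
    {Ω : Type*} [MeasurableSpace Ω] {μ : Measure Ω} [IsProbabilityMeasure μ]
    (ρ σ₁ σ₂ : ℝ)
    (hσ₂ : 0 < σ₂) (hρ : |ρ| ≤ 1)
    (A G₁ G₂ : Ω → ℝ) (hA : Measurable A) (hG₁ : Measurable G₁) (hG₂ : Measurable G₂)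
    (hGauss : ∀ t s : ℝ, ∫ ω, Complex.exp (((t * G₁ ω + s * G₂ ω : ℝ) : ℂ) * Complex.I) ∂μ
      = Complex.exp (-(((σ₁ ^ 2 * t ^ 2 + 2 * ρ * σ₁ * σ₂ * t * s + σ₂ ^ 2 * s ^ 2) / 2 : ℝ) : ℂ)))
    (hindep : IndepFun A (fun ω => (G₁ ω, G₂ ω)) μ)
    (X Y : Ω → ℝ) (hX : X = fun ω => Real.sqrt (A ω) * G₁ ω)
    (hY : Y = fun ω => Real.sqrt (A ω) * G₂ ω) :
    ∀ᵐ y ∂(μ.map Y),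
      (∫⁻ a, ENNReal.ofReal (Real.sqrt a) ∂(condDistrib A Y μ y)) < ⊤ ∧
      Integrable (fun x => x) (condDistrib X Y μ y) := by
  subst hX hY
  have hlaw : μ.map (fun ω ↦ (√(A ω), (G₁ ω - ρ * σ₁ / σ₂ * G₂ ω, G₂ ω))) =
      (μ.map fun ω ↦ √(A ω)).prod ((gaussianReal 0 ((1 - ρ ^ 2) * σ₁ ^ 2).toNNReal).prod
        (gaussianReal 0 (σ₂ ^ 2).toNNReal)) := by
    rw [← map_sub_mul_prod_eq_gaussianReal_prod hσ₂.ne' hρ hG₁ hG₂ hGauss]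
    exact (indepFun_iff_map_prod_eq_prod_map_map (by fun_prop) (by fun_prop)).mp
      (hindep.comp (by fun_prop : Measurable Real.sqrt)
        (by fun_prop : Measurable fun p : ℝ × ℝ ↦ (p.1 - ρ * σ₁ / σ₂ * p.2, p.2)))
  have hv : (σ₂ ^ 2).toNNReal ≠ 0 := by simpa using hσ₂.ne'
  have hresidual : ∫⁻ r, ‖r‖ₑ ∂gaussianReal 0 ((1 - ρ ^ 2) * σ₁ ^ 2).toNNReal ≠ ∞ :=
    (memLp_one_iff_integrable.mp (memLp_id_gaussianReal 1)).hasFiniteIntegral.ne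
  have hw₀ (y : ℝ) : ENNReal.ofReal (rexp (-y ^ 2)) ≠ 0 := (ENNReal.ofReal_pos.mpr (exp_pos _)).ne'
  have hY : Measurable fun ω ↦ √(A ω) * G₂ ω := by fun_prop
  filter_upwards [ae_lintegral_condDistrib_lt_top (f := fun a ↦ ENNReal.ofReal √a) hY hA
      (by fun_prop) hw₀ (by fun_prop)
      (lintegral_exp_neg_sq_mul_ofReal_ne_top (by fun_prop) hG₁ hG₂ hv hlaw),
    ae_lintegral_condDistrib_lt_top (f := fun x ↦ ‖x‖ₑ) hY (by fun_prop) (by fun_prop) hw₀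
      (by fun_prop) (lintegral_exp_neg_sq_mul_enorm_ne_top (by fun_prop) (fun _ ↦ sqrt_nonneg _)
        hG₁ hG₂ hv hlaw hresidual)] with y hsqrt hnorm
  exact ⟨hsqrt, aestronglyMeasurable_id, hnorm⟩

/-- Integrability of the conditional residual in the sub-Gaussian SαS model
`X = √A·G₁`, `Y = √A·G₂`: for almost every `y`, `∫ √a d(condDistrib A Y μ y)(a) < ∞`,
and consequently the identity function is integrable with respect to
`condDistrib X Y μ y` (finite conditional first absolute moment). -/
theorem subGaussian_conditional_residual_integrable
    {Ω : Type*} [MeasurableSpace Ω] {μ : Measure Ω} [IsProbabilityMeasure μ]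
    (α ρ σ₁ σ₂ : ℝ) (hα : α ∈ Set.Ioo (0 : ℝ) 2)
    (hσ₁ : 0 < σ₁) (hσ₂ : 0 < σ₂) (hρ : |ρ| ≤ 1)
    (A G₁ G₂ : Ω → ℝ) (hA : Measurable A) (hG₁ : Measurable G₁) (hG₂ : Measurable G₂)
    (hApos : ∀ ω, 0 ≤ A ω)
    (hLaplace : ∀ u : ℝ, 0 ≤ u → ∫ ω, Real.exp (-u * A ω) ∂μ
      = Real.exp (-(Real.cos (π * α / 4) ^ (2 / α) * u) ^ (α / 2)))
    (hGauss : ∀ t s : ℝ, ∫ ω, Complex.exp (((t * G₁ ω + s * G₂ ω : ℝ) : ℂ) * Complex.I) ∂μ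
      = Complex.exp (-(((σ₁ ^ 2 * t ^ 2 + 2 * ρ * σ₁ * σ₂ * t * s + σ₂ ^ 2 * s ^ 2) / 2 : ℝ) : ℂ)))
    (hindep : IndepFun A (fun ω => (G₁ ω, G₂ ω)) μ)
    (X Y : Ω → ℝ) (hX : X = fun ω => Real.sqrt (A ω) * G₁ ω)
    (hY : Y = fun ω => Real.sqrt (A ω) * G₂ ω) :
    ∀ᵐ y ∂(μ.map Y),
      (∫⁻ a, ENNReal.ofReal (Real.sqrt a) ∂(condDistrib A Y μ y)) < ⊤ ∧
      Integrable (fun x => x) (condDistrib X Y μ y) :=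
  subGaussian_conditional_residual_integrable_general ρ σ₁ σ₂ hσ₂ hρ A G₁ G₂ hA hG₁ hG₂ hGauss
    hindep X Y hX hY
end

section
/- A Gaussian scale mixture by a positive α/2-stable mixing variable is SαS: let A be a nonnegative random variable on a probability space (Ω, μ) with E[exp(−uA)] = exp(−(γ u)^{α/2}) for all u ≥ 0, where α ∈ (0,2) and γ > 0, and let G be a Gaussian random variable with law gaussianReal 0 σ² (σ² > 0), independent of A. Then for every t ∈ ℝ, the characteristic function of the law of √A·G at t equals exp(−(σ²γ/2)^{α/2}|t|^α); that is, √A·G is SαS(α, (σ²γ/2)^{1/2}). -/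
/-!
Conditionally on `A`, the variable `√A·G` is centred Gaussian with variance `vA`, so its
characteristic function at `t` is `exp(-(v t² / 2) A)`. Averaging over `A` (Fubini, by
independence) turns this into the Laplace transform of `A` at `v t² / 2`, which is
`exp(-(γ v t² / 2)^{α/2}) = exp(-(vγ/2)^{α/2} |t|^α)`.
-/

open MeasureTheory ProbabilityTheory Real Set

open scoped NNReal

lemma ProbabilityTheory.IndepFun.integral_comp_eq_integral_integral_map
    {Ω α β E : Type*} [MeasurableSpace Ω] [MeasurableSpace α] [MeasurableSpace β]
    [NormedAddCommGroup E] [NormedSpace ℝ E] {μ : Measure Ω} [IsFiniteMeasure μ]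
    {X : Ω → α} {Y : Ω → β} (hX : AEMeasurable X μ) (hY : AEMeasurable Y μ)
    (hXY : IndepFun X Y μ) {F : α × β → E} (hF : Integrable F ((μ.map X).prod (μ.map Y))) :
    ∫ ω, F (X ω, Y ω) ∂μ = ∫ ω, ∫ y, F (X ω, y) ∂(μ.map Y) ∂μ := by
  have hlaw : μ.map (fun ω ↦ (X ω, Y ω)) = (μ.map X).prod (μ.map Y) :=
    (indepFun_iff_map_prod_eq_prod_map_map hX hY).mp hXY
  rw [← integral_map (hX.prodMk hY) (hlaw ▸ hF.aestronglyMeasurable), hlaw, integral_prod _ hF,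
    integral_map hX hF.integral_prod_left.aestronglyMeasurable]

lemma integral_cexp_sqrt_mul_gaussian {Ω : Type*} [MeasurableSpace Ω] {μ : Measure Ω}
    [IsFiniteMeasure μ] {A G : Ω → ℝ} (hA : AEMeasurable A μ) (hG : AEMeasurable G μ)
    (hA_nonneg : 0 ≤ᵐ[μ] A) {v : ℝ≥0} (hGauss : μ.map G = gaussianReal 0 v)
    (hindep : IndepFun A G μ) (t : ℝ) :
    ∫ ω, Complex.exp ((t * (√(A ω) * G ω) : ℝ) * Complex.I) ∂μ
      = (∫ ω, rexp (-(v * t ^ 2 / 2) * A ω) ∂μ : ℝ) := by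
  have hF : Integrable (fun p : ℝ × ℝ ↦ Complex.exp ((t * (√p.1 * p.2) : ℝ) * Complex.I))
      ((μ.map A).prod (μ.map G)) :=
    .of_bound (by fun_prop) 1 (.of_forall fun p ↦ (Complex.norm_exp_ofReal_mul_I _).le)
  rw [hindep.integral_comp_eq_integral_integral_map hA hG hF, ← integral_complex_ofReal]
  refine integral_congr_ae ?_
  filter_upwards [hA_nonneg] with ω hω
  have hcf : charFun (gaussianReal 0 v) (t * √(A ω)) = rexp (-(v * t ^ 2 / 2) * A ω) := by
    have hsq : (√(A ω) : ℂ) ^ 2 = A ω := mod_cast Real.sq_sqrt hω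
    rw [charFun_gaussianReal, Complex.ofReal_exp]
    push_cast
    rw [mul_pow, hsq]
    ring_nf
  rw [← hcf, charFun_apply_real, hGauss]
  simp only [Complex.ofReal_mul, mul_assoc]

lemma mul_sq_rpow_div_two {c : ℝ} (hc : 0 ≤ c) (t α : ℝ) :
    (c * t ^ 2) ^ (α / 2) = c ^ (α / 2) * |t| ^ α := by
  rw [mul_rpow hc (sq_nonneg t), ← sq_abs, ← rpow_natCast, ← rpow_mul (abs_nonneg t)]
  norm_num
  left
  ring_nf

theorem gaussian_scale_mixture_is_sas_general
    {Ω : Type*} [MeasurableSpace Ω] {μ : Measure Ω} [IsProbabilityMeasure μ]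
    (α γ : ℝ) (hγ : 0 < γ)
    (v : NNReal)
    (A G : Ω → ℝ) (hA : Measurable A) (hG : Measurable G)
    (hApos : ∀ ω, 0 ≤ A ω)
    (hLaplace : ∀ u : ℝ, 0 ≤ u → ∫ ω, Real.exp (-u * A ω) ∂μ
      = Real.exp (-(γ * u) ^ (α / 2)))
    (hGauss : μ.map G = gaussianReal 0 v)
    (hindep : IndepFun A G μ) :
    ∀ t : ℝ, ∫ ω, Complex.exp (((t * (Real.sqrt (A ω) * G ω) : ℝ) : ℂ) * Complex.I) ∂μ
      = Complex.exp (-((((v : ℝ) * γ / 2) ^ (α / 2) * |t| ^ α : ℝ) : ℂ)) := by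
  intro t
  have hscale : γ * (v * t ^ 2 / 2) = (v * γ / 2) * t ^ 2 := by ring
  rw [integral_cexp_sqrt_mul_gaussian hA.aemeasurable hG.aemeasurable (.of_forall hApos) hGauss
      hindep, hLaplace _ (by positivity), hscale, mul_sq_rpow_div_two (by positivity),
    Complex.ofReal_exp, Complex.ofReal_neg]

/-- A Gaussian scale mixture by a positive `α/2`-stable mixing variable is SαS: if `A ≥ 0`
has Laplace transform `u ↦ exp(−(γu)^{α/2})` and `G ~ N(0, v)` is independent of `A`, then
`√A·G` has characteristic function `t ↦ exp(−(vγ/2)^{α/2}|t|^α)`, i.e. it is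
SαS(α, (vγ/2)^{1/2}). -/
theorem gaussian_scale_mixture_is_sas
    {Ω : Type*} [MeasurableSpace Ω] {μ : Measure Ω} [IsProbabilityMeasure μ]
    (α γ : ℝ) (hα : α ∈ Set.Ioo (0 : ℝ) 2) (hγ : 0 < γ)
    (v : NNReal) (hv : 0 < v)
    (A G : Ω → ℝ) (hA : Measurable A) (hG : Measurable G)
    (hApos : ∀ ω, 0 ≤ A ω)
    (hLaplace : ∀ u : ℝ, 0 ≤ u → ∫ ω, Real.exp (-u * A ω) ∂μ
      = Real.exp (-(γ * u) ^ (α / 2)))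
    (hGauss : μ.map G = gaussianReal 0 v)
    (hindep : IndepFun A G μ) :
    ∀ t : ℝ, ∫ ω, Complex.exp (((t * (Real.sqrt (A ω) * G ω) : ℝ) : ℂ) * Complex.I) ∂μ
      = Complex.exp (-((((v : ℝ) * γ / 2) ^ (α / 2) * |t| ^ α : ℝ) : ℂ)) :=
  gaussian_scale_mixture_is_sas_general α γ hγ v A G hA hG hApos hLaplace hGauss hindep
end

section
/- MAP optimality of the linear estimator (analytic form): let τ > 0, c ∈ ℝ, and let p_A : (0,∞) → [0,∞) be a measurable function with ∫₀^∞ p_A(a) da = 1 and ∫₀^∞ a^{−1/2} p_A(a) da < ∞. Define q : ℝ → ℝ by q(x) = ∫₀^∞ (2π a τ²)^{−1/2} exp(−(x − c)²/(2 a τ²)) p_A(a) da. Then q(x) is finite for every x, and q attains a strict global maximum at x = c: for every x ≠ c, q(x) < q(c). (Applied with c = β·y, β = ρσ₁/σ₂, τ² = σ₁²(1−ρ²) and p_A the density of the positive α/2-stable mixing variable A, this says the posterior density of X given Y = y in the sub-Gaussian model is maximized exactly at the linear estimate β·y, so the MAP estimator of X given Y is β·Y.) -/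
open MeasureTheory Real Set

/-- The density at `x` of the normal law with mean `c` and variance `a * τ ^ 2`. -/
noncomputable def scaledGaussianKernel (τ c x a : ℝ) : ℝ :=
  (2 * π * a * τ ^ 2) ^ (-(1 : ℝ) / 2) * Real.exp (-(x - c) ^ 2 / (2 * a * τ ^ 2))

section ScaledGaussianKernel

variable (τ c x : ℝ) {a : ℝ}

lemma scaledGaussianKernel_nonneg (ha : 0 ≤ a) : 0 ≤ scaledGaussianKernel τ c x a := by
  unfold scaledGaussianKernel; positivity

lemma scaledGaussianKernel_le (ha : 0 ≤ a) :
    scaledGaussianKernel τ c x a ≤ (2 * π * τ ^ 2) ^ (-(1 : ℝ) / 2) * a ^ (-(1 : ℝ) / 2) := by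
  have hexp : Real.exp (-(x - c) ^ 2 / (2 * a * τ ^ 2)) ≤ 1 :=
    Real.exp_le_one_iff.2 (div_nonpos_of_nonpos_of_nonneg (neg_nonpos.2 (sq_nonneg _))
      (by positivity))
  calc scaledGaussianKernel τ c x a ≤ (2 * π * a * τ ^ 2) ^ (-(1 : ℝ) / 2) :=
        mul_le_of_le_one_right (by positivity) hexp
    _ = (2 * π * τ ^ 2) ^ (-(1 : ℝ) / 2) * a ^ (-(1 : ℝ) / 2) := by
        rw [← Real.mul_rpow (by positivity) ha]; ring_nf

lemma scaledGaussianKernel_lt_center (hτ : τ ≠ 0) (ha : 0 < a) (hx : x ≠ c) :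
    scaledGaussianKernel τ c x a < scaledGaussianKernel τ c c a := by
  have hexp : Real.exp (-(x - c) ^ 2 / (2 * a * τ ^ 2)) < 1 :=
    Real.exp_lt_one_iff.2 (div_neg_of_neg_of_pos
      (neg_neg_iff_pos.2 (sq_pos_of_ne_zero (sub_ne_zero.2 hx))) (by positivity))
  simpa [scaledGaussianKernel] using mul_lt_of_lt_one_right (by positivity) hexp

end ScaledGaussianKernel

lemma integrableOn_scaledGaussianKernel_mul (τ c x : ℝ) {p : ℝ → ℝ} (hp_meas : Measurable p)
    (hp_nonneg : ∀ a, 0 ≤ p a)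
    (hp_mom : IntegrableOn (fun a : ℝ => a ^ (-(1 : ℝ) / 2) * p a) (Ioi 0)) :
    IntegrableOn (fun a => scaledGaussianKernel τ c x a * p a) (Ioi 0) := by
  refine (hp_mom.const_mul ((2 * π * τ ^ 2) ^ (-(1 : ℝ) / 2))).mono'
    (by unfold scaledGaussianKernel; fun_prop) ?_
  refine ae_restrict_of_forall_mem measurableSet_Ioi fun a (ha : 0 < a) => ?_
  rw [Real.norm_of_nonneg (mul_nonneg (scaledGaussianKernel_nonneg τ c x ha.le) (hp_nonneg a)),
    ← mul_assoc]
  exact mul_le_mul_of_nonneg_right (scaledGaussianKernel_le τ c x ha.le) (hp_nonneg a)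

/-- If `f < g` almost everywhere then `f * p = g * p` a.e. forces `p = 0` a.e., which a nonzero
integral of `p` rules out. -/
lemma integral_mul_lt_integral_mul {α : Type*} [MeasurableSpace α] {μ : Measure α}
    {f g p : α → ℝ} (hf : Integrable (fun a => f a * p a) μ)
    (hg : Integrable (fun a => g a * p a) μ) (hp : 0 ≤ᵐ[μ] p) (hfg : ∀ᵐ a ∂μ, f a < g a)
    (hp_int : ∫ a, p a ∂μ ≠ 0) :
    ∫ a, f a * p a ∂μ < ∫ a, g a * p a ∂μ := by
  have hle : (fun a => f a * p a) ≤ᵐ[μ] fun a => g a * p a := by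
    filter_upwards [hp, hfg] with a hpa hfga
    exact mul_le_mul_of_nonneg_right hfga.le hpa
  refine (integral_mono_ae hf hg hle).lt_of_ne fun heq => hp_int (integral_eq_zero_of_ae ?_)
  filter_upwards [(integral_eq_iff_of_ae_le hf hg hle).1 heq, hfg] with a heqa hlt
  by_contra hpa
  exact hlt.ne (mul_right_cancel₀ hpa heqa)

/-- MAP optimality of the linear estimator (analytic form): the Gaussian scale-mixture
posterior density `q(x) = ∫₀^∞ (2πaτ²)^{−1/2} exp(−(x−c)²/(2aτ²)) p_A(a) da` is finite
everywhere (the integrand is integrable) and attains a strict global maximum at `x = c`. -/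
theorem map_strict_max_of_scale_mixture
    (τ c : ℝ) (hτ : 0 < τ)
    (pA : ℝ → ℝ) (hpA_meas : Measurable pA) (hpA_nonneg : ∀ a, 0 ≤ pA a)
    (hpA_prob : ∫ a in Ioi (0 : ℝ), pA a = 1)
    (hpA_mom : IntegrableOn (fun a : ℝ => a ^ (-(1 : ℝ) / 2) * pA a) (Ioi 0))
    (q : ℝ → ℝ)
    (hq : q = fun x => ∫ a in Ioi (0 : ℝ),
      (2 * π * a * τ ^ 2) ^ (-(1 : ℝ) / 2) * Real.exp (-(x - c) ^ 2 / (2 * a * τ ^ 2)) * pA a) :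
    (∀ x : ℝ, IntegrableOn (fun a : ℝ =>
        (2 * π * a * τ ^ 2) ^ (-(1 : ℝ) / 2) * Real.exp (-(x - c) ^ 2 / (2 * a * τ ^ 2)) * pA a)
      (Ioi 0)) ∧
    (∀ x : ℝ, x ≠ c → q x < q c) := by
  have hint : ∀ x, IntegrableOn (fun a => scaledGaussianKernel τ c x a * pA a) (Ioi 0) :=
    fun x => integrableOn_scaledGaussianKernel_mul τ c x hpA_meas hpA_nonneg hpA_mom
  refine ⟨hint, fun x hx => ?_⟩
  subst hq
  exact integral_mul_lt_integral_mul (hint x) (hint c) (ae_of_all _ hpA_nonneg)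
    (ae_restrict_of_forall_mem measurableSet_Ioi fun a ha =>
      scaledGaussianKernel_lt_center τ c x hτ.ne' ha hx)
    (hpA_prob ▸ one_ne_zero)
end
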